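/- arXiv:1511.01861 — 2 statements merged into one kernel-verified Lean document; each statement's English description precedes it below -/
import Mathlib

section
/- Let λ > 0 and 0 < p ≤ 1, and set a := (λ + 1)/p. Then lim_{i → ∞} i^{1+a} · Π_{j=2}^{i} ( p·(j − 1) / (λ + 1 + p·j) ) = Γ(2 + a), where Γ denotes the Gamma function and the limit is over positive integers i. In particular, Π_{j=2}^{i} p·(j − 1)/(λ + 1 + p·j) is asymptotically proportional to i^{−(1 + (λ+1)/p)}. -/
open Finset Filter

/-- Let `λ > 0`, `0 < p ≤ 1`, and `a := (λ+1)/p`.  Then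
`lim_{i → ∞} i^{1+a} · Π_{j=2}^{i} (p·(j−1)/(λ+1+p·j)) = Γ(2 + a)` (limit over positive
integers), so in particular the product is asymptotically proportional to
`i^{−(1 + (λ+1)/p)}`. -/
theorem stmt_6 (lam p : ℝ) (hlam : 0 < lam) (hp0 : 0 < p) (hp1 : p ≤ 1) :
    Tendsto
      (fun i : ℕ =>
        (i : ℝ) ^ ((1 : ℝ) + (lam + 1) / p) *
          ∏ j ∈ Finset.Icc 2 i, (p * ((j : ℝ) - 1)) / (lam + 1 + p * j))
      atTop (nhds (Real.Gamma (2 + (lam + 1) / p)))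
    ∧ ∃ C : ℝ, 0 < C ∧
        Tendsto
          (fun i : ℕ =>
            (∏ j ∈ Finset.Icc 2 i, (p * ((j : ℝ) - 1)) / (lam + 1 + p * j))
              / (i : ℝ) ^ (-(1 + (lam + 1) / p)))
          atTop (nhds C) := by
  set a : ℝ := (lam + 1) / p with ha_def
  have ha : 0 < a := div_pos (by linarith) hp0
  have hfac : ∀ j : ℕ, (p * ((j : ℝ) - 1)) / (lam + 1 + p * j) = ((j : ℝ) - 1) / (a + j) := by
    intro j
    have h1 : (0:ℝ) < lam + 1 + p * j := by positivity
    have h2 : (0:ℝ) < a + j := by positivity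
    rw [div_eq_div_iff h1.ne' h2.ne', ha_def]
    field_simp
  have hprodeq : ∀ i : ℕ,
      ∏ j ∈ Finset.Icc 2 i, (p * ((j : ℝ) - 1)) / (lam + 1 + p * j)
        = ∏ j ∈ Finset.Icc 2 i, ((j : ℝ) - 1) / (a + j) :=
    fun i => Finset.prod_congr rfl fun j _ => hfac j
  -- product identities
  have hA : ∀ i : ℕ, 1 ≤ i → ∏ j ∈ Finset.Icc 2 i, ((j : ℝ) - 1) = (Nat.factorial (i - 1) : ℝ) := by
    intro i hi
    induction i with
    | zero => omega
    | succ n ih =>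
      rcases Nat.eq_or_lt_of_le hi with h | h
      · simp [← h]
      · have hn : 1 ≤ n := by omega
        rw [Finset.prod_Icc_succ_top (by omega), ih hn]
        have : n + 1 - 1 = (n - 1) + 1 := by omega
        rw [this, Nat.factorial_succ]
        push_cast [Nat.cast_sub hn]
        ring
  have hB : ∀ i : ℕ, 1 ≤ i →
      ∏ j ∈ Finset.range (i + 1), (a + (j : ℝ))
        = a * (a + 1) * ∏ j ∈ Finset.Icc 2 i, (a + (j : ℝ)) := by
    intro i hi
    induction i with
    | zero => omega
    | succ n ih =>
      rcases Nat.eq_or_lt_of_le hi with h | h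
      · rw [← h]; norm_num [Finset.prod_range_succ]
      · have hn : 1 ≤ n := by omega
        rw [Finset.prod_range_succ, ih hn, Finset.prod_Icc_succ_top (by omega : 2 ≤ n + 1)]
        ring
  have hkey : ∀ i : ℕ, 1 ≤ i →
      (i : ℝ) ^ ((1 : ℝ) + a) * ∏ j ∈ Finset.Icc 2 i, ((j : ℝ) - 1) / (a + j)
        = a * (a + 1) * Real.GammaSeq a i := by
    intro i hi
    have hipos : (0:ℝ) < i := by exact_mod_cast hi
    have hP : (0:ℝ) < ∏ j ∈ Finset.Icc 2 i, (a + (j : ℝ)) :=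
      Finset.prod_pos fun j _ => by positivity
    rw [Real.GammaSeq, Finset.prod_div_distrib, hA i hi, hB i hi,
      Real.rpow_add hipos, Real.rpow_one]
    have hfact : (i : ℝ) * (Nat.factorial (i - 1) : ℝ) = (Nat.factorial i : ℝ) := by
      rw_mod_cast [Nat.mul_factorial_pred (by omega)]
    field_simp
    rw [← hfact]
  have hGamma : a * (a + 1) * Real.Gamma a = Real.Gamma (2 + a) := by
    have h2 : (2:ℝ) + a = (a + 1) + 1 := by ring
    rw [h2, Real.Gamma_add_one (by positivity), Real.Gamma_add_one ha.ne']
    ring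
  have htends : Tendsto
      (fun i : ℕ =>
        (i : ℝ) ^ ((1 : ℝ) + (lam + 1) / p) *
          ∏ j ∈ Finset.Icc 2 i, (p * ((j : ℝ) - 1)) / (lam + 1 + p * j))
      atTop (nhds (Real.Gamma (2 + (lam + 1) / p))) := by
    rw [← ha_def] at *
    rw [← hGamma]
    refine Tendsto.congr' ?_ ((Real.GammaSeq_tendsto_Gamma a).const_mul (a * (a + 1)))
    filter_upwards [eventually_ge_atTop 1] with i hi
    rw [← hkey i hi, hprodeq]
  refine ⟨htends, Real.Gamma (2 + (lam + 1) / p),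
    Real.Gamma_pos_of_pos (by positivity), ?_⟩
  refine Tendsto.congr' ?_ htends
  filter_upwards [eventually_ge_atTop 1] with i hi
  have hipos : (0:ℝ) < i := by exact_mod_cast hi
  have hx : ((i : ℝ) ^ ((1 : ℝ) + a)) ≠ 0 := by positivity
  rw [Real.rpow_neg hipos.le, eq_div_iff (inv_ne_zero hx), ← ha_def,
    mul_comm, ← mul_assoc, inv_mul_cancel₀ hx, one_mul]
end

section
/- Let λ > 0 and 0 < p ≤ 1, and set a := (λ + 1)/p. Let f : ℕ → ℝ be a sequence with f_i ≥ 0 for all i ≥ 1, satisfying f_i ≤ ( p·(i − 1) / (λ + 1 + p·i) )·f_{i−1} for every integer i ≥ 2. Then for every integer i ≥ 1, f_i ≤ f_1 · Γ(2 + a) · Γ(i)/Γ(i + 1 + a), and consequently there exists a constant M ≥ 0 such that f_i ≤ M · i^{−(1 + (λ+1)/p)} for all integers i ≥ 1. -/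
/-!
With `a = (λ + 1) / p` the recurrence reads `f (i + 1) ≤ i / (i + 1 + a) * f i`, so `f` is
dominated, up to the constant `f 1 / g 1`, by any `g` with `i / (i + 1 + a) * g i ≤ g (i + 1)`.
The sequence `Γ(i) / Γ(i + 1 + a)` satisfies this with equality (`Γ(x + 1) = x Γ(x)`), and
`(i + a) ^ (-(1 + a))` satisfies it because `a log (1 + 1 / (i + a)) ≤ a / (i + a) ≤ log (1 + a / i)`.
-/

open Real

theorem le_const_mul_of_ratio_le {f g r : ℕ → ℝ} {C : ℝ} (hC : 0 ≤ C)
    (hr : ∀ i, 1 ≤ i → 0 ≤ r i)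
    (hf : ∀ i, 1 ≤ i → f (i + 1) ≤ r i * f i)
    (hg : ∀ i, 1 ≤ i → r i * g i ≤ g (i + 1))
    (h₁ : f 1 ≤ C * g 1) : ∀ i, 1 ≤ i → f i ≤ C * g i := by
  intro i hi
  induction i, hi using Nat.le_induction with
  | base => exact h₁
  | succ i hi ih =>
    calc f (i + 1) ≤ r i * f i := hf i hi
      _ ≤ r i * (C * g i) := mul_le_mul_of_nonneg_left ih (hr i hi)
      _ = C * (r i * g i) := by ring
      _ ≤ C * g (i + 1) := mul_le_mul_of_nonneg_left (hg i hi) hC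

theorem Real.mul_Gamma_div_Gamma_add {x a : ℝ} (hx : 0 < x) (ha : 0 ≤ a) :
    x / (x + 1 + a) * (Gamma x / Gamma (x + 1 + a)) = Gamma (x + 1) / Gamma (x + 1 + 1 + a) := by
  have hxa : 0 < x + 1 + a := by linarith
  rw [Gamma_add_one hx.ne', show x + 1 + 1 + a = x + 1 + a + 1 by ring, Gamma_add_one hxa.ne']
  have := (Gamma_pos_of_pos hxa).ne'
  field_simp

theorem Real.mul_rpow_le_rpow_one_add {x a : ℝ} (hx : 0 < x) (ha : 0 ≤ a) :
    x * (x + 1 + a) ^ a ≤ (x + a) ^ (1 + a) := by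
  have hu : 0 < x + a := by linarith
  have hv : 0 < x + 1 + a := by linarith
  -- `log y ≤ y - 1` and `1 - y⁻¹ ≤ log y` meet at `a / (x + a)`
  have hlog : a * log ((x + 1 + a) / (x + a)) ≤ log ((x + a) / x) :=
    calc a * log ((x + 1 + a) / (x + a)) ≤ a * ((x + 1 + a) / (x + a) - 1) :=
          mul_le_mul_of_nonneg_left (log_le_sub_one_of_pos (by positivity)) ha
      _ = 1 - ((x + a) / x)⁻¹ := by field_simp; ring
      _ ≤ log ((x + a) / x) := one_sub_inv_le_log_of_pos (by positivity)
  have hpow : ((x + 1 + a) / (x + a)) ^ a ≤ (x + a) / x := by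
    rw [rpow_def_of_pos (by positivity), ← exp_log (show 0 < (x + a) / x by positivity)]
    exact exp_le_exp.2 (by linarith)
  rw [div_rpow hv.le hu.le, div_le_div_iff₀ (by positivity) hx] at hpow
  rw [rpow_one_add' hu.le (by linarith)]
  linarith

theorem Real.div_mul_rpow_neg_le {x a : ℝ} (hx : 0 < x) (ha : 0 ≤ a) :
    x / (x + 1 + a) * (x + a) ^ (-(1 + a)) ≤ (x + 1 + a) ^ (-(1 + a)) := by
  have hu : 0 < x + a := by linarith
  have hv : 0 < x + 1 + a := by linarith
  rw [rpow_neg hu.le, rpow_neg hv.le, ← div_eq_mul_inv, div_div, inv_eq_one_div,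
    div_le_div_iff₀ (by positivity) (by positivity), rpow_one_add' hv.le (by linarith)]
  nlinarith [mul_rpow_le_rpow_one_add hx ha]

theorem recurrence_ratio_eq {lam p : ℝ} (hlam : 0 < lam) (hp : 0 < p) (i : ℕ) :
    p * (((i + 1 : ℕ) : ℝ) - 1) / (lam + 1 + p * ((i + 1 : ℕ) : ℝ))
      = i / (i + 1 + (lam + 1) / p) := by
  have : 0 < lam + 1 + p * (i + 1) := by positivity
  push_cast
  field_simp
  ring

theorem stmt_7_general (lam p : ℝ) (hlam : 0 < lam) (hp0 : 0 < p)
    (f : ℕ → ℝ) (hf : ∀ i : ℕ, 1 ≤ i → 0 ≤ f i)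
    (hrec : ∀ i : ℕ, 2 ≤ i → f i ≤ (p * ((i : ℝ) - 1) / (lam + 1 + p * i)) * f (i - 1)) :
    (∀ i : ℕ, 1 ≤ i →
      f i ≤ f 1 * Real.Gamma (2 + (lam + 1) / p) * Real.Gamma i
              / Real.Gamma ((i : ℝ) + 1 + (lam + 1) / p))
    ∧ ∃ M : ℝ, 0 ≤ M ∧ ∀ i : ℕ, 1 ≤ i →
        f i ≤ M * (i : ℝ) ^ (-(1 + (lam + 1) / p)) := by
  set a := (lam + 1) / p
  have ha : 0 ≤ a := by positivity
  set r : ℕ → ℝ := fun i => i / (i + 1 + a)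
  have hr : ∀ i : ℕ, 1 ≤ i → 0 ≤ r i := fun i _ => by positivity
  have hstep : ∀ i : ℕ, 1 ≤ i → f (i + 1) ≤ r i * f i := fun i _ => by
    have := hrec (i + 1) (by omega)
    rwa [Nat.add_sub_cancel, recurrence_ratio_eq hlam hp0] at this
  have hf₁ := hf 1 le_rfl
  have hΓ : 0 < Gamma (2 + a) := Gamma_pos_of_pos (by positivity)
  have hGamma : ∀ i : ℕ, 1 ≤ i →
      f i ≤ f 1 * Gamma (2 + a) * (Gamma i / Gamma ((i : ℝ) + 1 + a)) := by
    refine le_const_mul_of_ratio_le (by positivity) hr hstep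
      (fun i _ => by push_cast [r]; exact (mul_Gamma_div_Gamma_add (by positivity) ha).le) ?_
    rw [Nat.cast_one, Gamma_one, show (1 : ℝ) + 1 + a = 2 + a by ring, mul_one_div,
      mul_div_cancel_right₀ _ hΓ.ne']
  have hpow : ∀ i : ℕ, 1 ≤ i →
      f i ≤ f 1 * (1 + a) ^ (1 + a) * ((i : ℝ) + a) ^ (-(1 + a)) := by
    refine le_const_mul_of_ratio_le (by positivity) hr hstep
      (fun i _ => by push_cast [r]; exact div_mul_rpow_neg_le (by positivity) ha) ?_
    rw [Nat.cast_one, rpow_neg (by positivity), mul_inv_cancel_right₀ (by positivity)]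
  refine ⟨fun i hi => mul_div_assoc (f 1 * Gamma (2 + a)) _ _ ▸ hGamma i hi,
    f 1 * (1 + a) ^ (1 + a), by positivity, fun i hi => (hpow i hi).trans ?_⟩
  exact mul_le_mul_of_nonneg_left
    (rpow_le_rpow_of_nonpos (Nat.cast_pos.2 hi) (by linarith) (by linarith)) (by positivity)

/-- Let `λ > 0`, `0 < p ≤ 1`, `a := (λ+1)/p`, and let `f : ℕ → ℝ` be nonnegative on the
positive integers with `f_i ≤ (p·(i−1)/(λ+1+p·i))·f_{i−1}` for every `i ≥ 2`.  Then for every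
`i ≥ 1`, `f_i ≤ f_1 · Γ(2 + a) · Γ(i)/Γ(i + 1 + a)`, and consequently there is `M ≥ 0` with
`f_i ≤ M · i^{−(1 + (λ+1)/p)}` for all `i ≥ 1`. -/
theorem stmt_7 (lam p : ℝ) (hlam : 0 < lam) (hp0 : 0 < p) (hp1 : p ≤ 1)
    (f : ℕ → ℝ) (hf : ∀ i : ℕ, 1 ≤ i → 0 ≤ f i)
    (hrec : ∀ i : ℕ, 2 ≤ i → f i ≤ (p * ((i : ℝ) - 1) / (lam + 1 + p * i)) * f (i - 1)) :
    (∀ i : ℕ, 1 ≤ i →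
      f i ≤ f 1 * Real.Gamma (2 + (lam + 1) / p) * Real.Gamma i
              / Real.Gamma ((i : ℝ) + 1 + (lam + 1) / p))
    ∧ ∃ M : ℝ, 0 ≤ M ∧ ∀ i : ℕ, 1 ≤ i →
        f i ≤ M * (i : ℝ) ^ (-(1 + (lam + 1) / p)) :=
  stmt_7_general lam p hlam hp0 f hf hrec
end
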